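/- Let N be a quantum channel on d×d complex matrices and γ a positive-definite density matrix with N(γ) positive definite. Suppose N is covariant with respect to γ, i.e., for every real θ and every d×d matrix X: N(γ^{iθ} X γ^{−iθ}) = N(γ)^{iθ} N(X) N(γ)^{−iθ}. Then every rotated Petz recovery map coincides with the ordinary Petz recovery map: R_γ^θ = R_γ for all real θ. -/

import Mathlib

open Matrix
open scoped ComplexOrder

/-- ⟨v|A|w⟩ -/
noncomputable def braket {d : ℕ} (v : Fin d → ℂ) (A : Matrix (Fin d) (Fin d) ℂ)
    (w : Fin d → ℂ) : ℂ :=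
  dotProduct (star v) (A.mulVec w)

/-- |v⟩⟨w| -/
noncomputable def ketbra {d : ℕ} (v w : Fin d → ℂ) : Matrix (Fin d) (Fin d) ℂ :=
  Matrix.vecMulVec v (star w)

/-- A quantum channel in Kraus form: N(X) = ∑ m, K m * X * (K m)ᴴ. -/
noncomputable def krausMap {d : ℕ} {ι : Type} [Fintype ι] (K : ι → Matrix (Fin d) (Fin d) ℂ)
    (X : Matrix (Fin d) (Fin d) ℂ) : Matrix (Fin d) (Fin d) ℂ :=
  ∑ m, K m * X * (K m)ᴴ

/-- The adjoint map: N†(X) = ∑ m, (K m)ᴴ * X * K m. -/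
noncomputable def krausAdj {d : ℕ} {ι : Type} [Fintype ι] (K : ι → Matrix (Fin d) (Fin d) ℂ)
    (X : Matrix (Fin d) (Fin d) ℂ) : Matrix (Fin d) (Fin d) ℂ :=
  ∑ m, (K m)ᴴ * X * K m

/-- Functional calculus of a Hermitian matrix, via its spectral decomposition
(junk value `0` on non-Hermitian matrices). -/
noncomputable def mfun {n : Type} [Fintype n] [DecidableEq n] (f : ℝ → ℂ)
    (M : Matrix n n ℂ) : Matrix n n ℂ :=
  if h : M.IsHermitian then
    (h.eigenvectorUnitary : Matrix n n ℂ) *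
      Matrix.diagonal (fun i => f (h.eigenvalues i)) *
      star (h.eigenvectorUnitary : Matrix n n ℂ)
  else 0

/-- Complex matrix power A^z = exp (z log A) of a positive-definite matrix,
defined via its spectral decomposition. -/
noncomputable def mpow {n : Type} [Fintype n] [DecidableEq n]
    (M : Matrix n n ℂ) (z : ℂ) : Matrix n n ℂ :=
  mfun (fun r => (r : ℂ) ^ z) M

/-- The rotated Petz recovery map
R_γ^θ(X) = γ^{1/2+iθ} N†(N(γ)^{-1/2-iθ} X N(γ)^{-1/2+iθ}) γ^{1/2-iθ}. -/
noncomputable def rotPetz {d : ℕ} {ι : Type} [Fintype ι] (K : ι → Matrix (Fin d) (Fin d) ℂ)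
    (γ : Matrix (Fin d) (Fin d) ℂ) (θ : ℝ) (X : Matrix (Fin d) (Fin d) ℂ) :
    Matrix (Fin d) (Fin d) ℂ :=
  mpow γ (1/2 + θ * Complex.I) *
    krausAdj K (mpow (krausMap K γ) (-(1/2) - θ * Complex.I) * X *
      mpow (krausMap K γ) (-(1/2) + θ * Complex.I)) *
    mpow γ (1/2 - θ * Complex.I)

/-!
Covariance says that the unitaries `γ^{iθ}` and `N(γ)^{iθ}` intertwine `N`; by trace duality
they then also intertwine the adjoint:
`γ^{-iθ} N†(B) γ^{iθ} = N†(N(γ)^{-iθ} B N(γ)^{iθ})`.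
Splitting `γ^{1/2 ± iθ}` and `N(γ)^{-1/2 ∓ iθ}` into a real power times such a unitary, the
rotation by `θ` in `R_γ^θ` is pulled through `N†`, where it cancels against its inverse.
-/

section FunctionalCalculus

variable {n : Type} [Fintype n] [DecidableEq n] {M : Matrix n n ℂ}

lemma mfun_mul_mfun (hM : M.IsHermitian) (f g : ℝ → ℂ) :
    mfun f M * mfun g M = mfun (fun r => f r * g r) M := by
  have hU : star (hM.eigenvectorUnitary : Matrix n n ℂ) * hM.eigenvectorUnitary = 1 :=
    mem_unitaryGroup_iff'.mp hM.eigenvectorUnitary.2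
  simp only [mfun, dif_pos hM, ← diagonal_mul_diagonal, mul_assoc]
  rw [← mul_assoc (star _), hU, one_mul]

lemma mfun_one (hM : M.IsHermitian) : mfun (fun _ => 1) M = 1 := by
  have hU : (hM.eigenvectorUnitary : Matrix n n ℂ) *
      star (hM.eigenvectorUnitary : Matrix n n ℂ) = 1 :=
    mem_unitaryGroup_iff.mp hM.eigenvectorUnitary.2
  simp only [mfun, dif_pos hM, diagonal_one, mul_one, hU]

lemma mfun_congr_of_posDef (hM : M.PosDef) {f g : ℝ → ℂ} (h : ∀ r, 0 < r → f r = g r) :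
    mfun f M = mfun g M := by
  simp only [mfun, dif_pos hM.1, h _ (hM.eigenvalues_pos _)]

lemma mpow_add (hM : M.PosDef) (a b : ℂ) : mpow M (a + b) = mpow M a * mpow M b := by
  rw [mpow, mpow, mpow, mfun_mul_mfun hM.1]
  exact mfun_congr_of_posDef hM fun r hr =>
    Complex.cpow_add _ _ (Complex.ofReal_ne_zero.mpr hr.ne')

lemma mpow_zero (hM : M.IsHermitian) : mpow M 0 = 1 := by
  simpa only [mpow, Complex.cpow_zero] using mfun_one hM

lemma mpow_mul_mpow_neg_mul (hM : M.PosDef) (z : ℂ) (A : Matrix n n ℂ) :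
    mpow M z * (mpow M (-z) * A) = A := by
  rw [← mul_assoc, ← mpow_add hM, add_neg_cancel, mpow_zero hM.1, one_mul]

end FunctionalCalculus

section Kraus

variable {d : ℕ} {ι : Type} [Fintype ι] (K : ι → Matrix (Fin d) (Fin d) ℂ)

lemma trace_krausMap_mul (A B : Matrix (Fin d) (Fin d) ℂ) :
    trace (krausMap K A * B) = trace (A * krausAdj K B) := by
  simp only [krausMap, krausAdj, Finset.sum_mul, Finset.mul_sum, trace_sum, mul_assoc]
  refine Finset.sum_congr rfl fun m _ => ?_
  rw [trace_mul_comm]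
  simp only [mul_assoc]

lemma krausAdj_conj_of_krausMap_conj {U U' V V' : Matrix (Fin d) (Fin d) ℂ}
    (h : ∀ Y, krausMap K (U * Y * U') = V * krausMap K Y * V') (B : Matrix (Fin d) (Fin d) ℂ) :
    U' * krausAdj K B * U = krausAdj K (V' * B * V) := by
  refine ext_iff_trace_mul_left.mpr fun Y => ?_
  calc trace (Y * (U' * krausAdj K B * U))
      = trace (U * Y * U' * krausAdj K B) := by
        simp only [mul_assoc]; rw [trace_mul_comm U]; simp only [mul_assoc]
    _ = trace (V * krausMap K Y * V' * B) := by rw [← h, trace_krausMap_mul]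
    _ = trace (krausMap K Y * (V' * B * V)) := by
        simp only [mul_assoc]; rw [trace_mul_comm V]; simp only [mul_assoc]
    _ = trace (Y * krausAdj K (V' * B * V)) := trace_krausMap_mul K _ _

end Kraus

theorem covariant_channel_rotated_petz_eq_petz_general
    {d : ℕ} {ι : Type} [Fintype ι] (K : ι → Matrix (Fin d) (Fin d) ℂ)
    (γ : Matrix (Fin d) (Fin d) ℂ) (hγ : γ.PosDef)
    (hNγ : (krausMap K γ).PosDef)
    (hcov : ∀ θ : ℝ, ∀ X : Matrix (Fin d) (Fin d) ℂ,
      krausMap K (mpow γ (θ * Complex.I) * X * mpow γ (-(θ * Complex.I))) =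
        mpow (krausMap K γ) (θ * Complex.I) * krausMap K X *
          mpow (krausMap K γ) (-(θ * Complex.I))) :
    ∀ θ : ℝ, ∀ X : Matrix (Fin d) (Fin d) ℂ, rotPetz K γ θ X = rotPetz K γ 0 X := by
  intro θ X
  set t : ℂ := θ * Complex.I
  set Nγ := krausMap K γ
  set Y := mpow Nγ (-(1/2)) * X * mpow Nγ (-(1/2))
  calc rotPetz K γ θ X
      = mpow γ (1/2) * (mpow γ t *
          krausAdj K (mpow Nγ (-t) * Y * mpow Nγ t) * mpow γ (-t)) * mpow γ (1/2) := by
        rw [rotPetz, mpow_add hγ (1/2) t, sub_eq_neg_add (1/2 : ℂ) t, mpow_add hγ (-t),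
          sub_eq_neg_add (-(1/2) : ℂ) t, mpow_add hNγ (-t), mpow_add hNγ (-(1/2)) t]
        simp only [Y, mul_assoc]
    _ = mpow γ (1/2) * (mpow γ t *
          (mpow γ (-t) * krausAdj K Y * mpow γ t) * mpow γ (-t)) * mpow γ (1/2) := by
        rw [krausAdj_conj_of_krausMap_conj K (hcov θ)]
    _ = mpow γ (1/2) * krausAdj K Y * mpow γ (1/2) := by
        simp only [mul_assoc, mpow_mul_mpow_neg_mul hγ]
    _ = rotPetz K γ 0 X := by
        simp only [rotPetz, Complex.ofReal_zero, zero_mul, add_zero, sub_zero, Y, Nγ]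

/-- if N is covariant with respect to γ, then every rotated Petz recovery
map coincides with the ordinary Petz recovery map. -/
theorem covariant_channel_rotated_petz_eq_petz
    {d : ℕ} {ι : Type} [Fintype ι] (K : ι → Matrix (Fin d) (Fin d) ℂ)
    (hK : ∑ m, (K m)ᴴ * K m = 1)
    (γ : Matrix (Fin d) (Fin d) ℂ) (hγ : γ.PosDef) (hγtr : γ.trace = 1)
    (hNγ : (krausMap K γ).PosDef)
    (hcov : ∀ θ : ℝ, ∀ X : Matrix (Fin d) (Fin d) ℂ,
      krausMap K (mpow γ (θ * Complex.I) * X * mpow γ (-(θ * Complex.I))) =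
        mpow (krausMap K γ) (θ * Complex.I) * krausMap K X *
          mpow (krausMap K γ) (-(θ * Complex.I))) :
    ∀ θ : ℝ, ∀ X : Matrix (Fin d) (Fin d) ℂ, rotPetz K γ θ X = rotPetz K γ 0 X :=
  covariant_channel_rotated_petz_eq_petz_general K γ hγ hNγ hcov
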